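/- arXiv:1711.04279 — 3 statements merged into one kernel-verified Lean document; each statement's English description precedes it below -/
import Mathlib

section
/- Suppose a measurable set E ⊆ ℝⁿ satisfies the observability inequality for the heat equation, i.e. for every T > 0 there is a constant C_obs(n,T,E) > 0 such that every solution u of the heat equation with initial datum in L²(ℝⁿ) satisfies ∫_{ℝⁿ} |u(T,x)|² dx ≤ C_obs ∫_0^T ∫_E |u(t,x)|² dx dt. Then E is γ-thick at scale L for some γ > 0 and L > 0. -/
open MeasureTheory Real Set

noncomputable section

/-- The solution of the heat equation `∂ₜu − Δu = 0` with initial datum `u₀`,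
given by convolution with the heat kernel. -/
def heatSol (n : ℕ) (u₀ : EuclideanSpace ℝ (Fin n) → ℝ) (t : ℝ)
    (x : EuclideanSpace ℝ (Fin n)) : ℝ :=
  ∫ y, (4 * π * t) ^ (-(n : ℝ) / 2) * Real.exp (-‖x - y‖ ^ 2 / (4 * t)) * u₀ y

/-- `E ⊆ ℝⁿ` is `γ`-thick at scale `L` : `|E ∩ (x + LQ)| ≥ γ Lⁿ` for every `x`,
where `Q` is the open unit cube centered at the origin. -/
def IsThick (n : ℕ) (E : Set (EuclideanSpace ℝ (Fin n))) (γ L : ℝ) : Prop :=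
  ∀ x : EuclideanSpace ℝ (Fin n),
    ENNReal.ofReal (γ * L ^ n) ≤ volume (E ∩ {y | ∀ i, |y i - x i| < L / 2})

/-!
Test the observability inequality at time `T = 1/8` against the Gaussian datum `e^{-|y-c|²}`
centred at an arbitrary point `c`. The left-hand side is a positive constant independent of `c`.
For `t ≤ 1/8` the solution is at most `2^{n/2} e^{-|x-c|²/2}`, so the right-hand side is at most
`C/8 · ∫_E 2ⁿ e^{-|x-c|²}`. The Gaussian mass outside a ball `B(c, R)` is small uniformly in `c`
once `R` is large, so `|E ∩ B(c, R)|` is bounded below uniformly in `c`; and `B(c, R)` lies in the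
cube of side `2R` centred at `c`.
-/

open Filter Topology Metric

section TranslatedMass

variable {V : Type*} [NormedAddCommGroup V] [MeasurableSpace V] [BorelSpace V] {μ : Measure V}

theorem MeasureTheory.Integrable.exists_setIntegral_compl_ball_lt {g : V → ℝ}
    (hg : Integrable g μ) {ε : ℝ} (hε : 0 < ε) : ∃ R > 0, ∫ x in (ball 0 R)ᶜ, g x ∂μ < ε := by
  have hlim : Tendsto (fun k : ℕ => ∫ x in (ball (0 : V) k)ᶜ, g x ∂μ) atTop (𝓝 0) := by
    have := tendsto_setIntegral_of_antitone (μ := μ) (f := g)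
      (s := fun k : ℕ => (ball (0 : V) k)ᶜ) (fun k => measurableSet_ball.compl)
      (fun i j hij => compl_subset_compl.mpr (ball_subset_ball (Nat.cast_le.mpr hij)))
      ⟨0, hg.integrableOn⟩
    rwa [← compl_iUnion, iUnion_ball_nat, compl_univ, Measure.restrict_empty,
      integral_zero_measure] at this
  obtain ⟨k, hk⟩ := ((hlim.eventually (gt_mem_nhds hε)).and (eventually_ge_atTop 1)).exists
  exact ⟨k, by exact_mod_cast hk.2, hk.1⟩

variable [μ.IsAddRightInvariant]

theorem setIntegral_comp_sub_le {g : V → ℝ} (hg : Integrable g μ) (hg0 : 0 ≤ g) {A : ℝ}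
    (hgA : ∀ x, g x ≤ A) (S : Set V) (c : V) {R : ℝ} (hfin : μ (ball c R) ≠ ⊤) :
    ∫ x in S, g (x - c) ∂μ ≤ A * μ.real (S ∩ ball c R) + ∫ x in (ball 0 R)ᶜ, g x ∂μ := by
  have hgc : Integrable (fun x => g (x - c)) μ := hg.comp_sub_right c
  have hnear : ∫ x in S ∩ ball c R, g (x - c) ∂μ ≤ A * μ.real (S ∩ ball c R) := by
    have hfin' : μ (S ∩ ball c R) < ⊤ :=
      (measure_mono inter_subset_right).trans_lt hfin.lt_top
    refine (le_norm_self _).trans ?_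
    refine norm_setIntegral_le_of_norm_le_const (f := fun x => g (x - c)) hfin' fun x _ => ?_
    rw [Real.norm_of_nonneg (hg0 _)]
    exact hgA _
  have hfar : ∫ x in S \ ball c R, g (x - c) ∂μ ≤ ∫ x in (ball 0 R)ᶜ, g x ∂μ := by
    have hpre : (fun x => x - c) ⁻¹' (ball 0 R)ᶜ = (ball c R)ᶜ := by
      ext x; simp [dist_eq_norm]
    calc ∫ x in S \ ball c R, g (x - c) ∂μ ≤ ∫ x in (ball c R)ᶜ, g (x - c) ∂μ :=
          setIntegral_mono_set hgc.integrableOn (ae_of_all _ fun x => hg0 (x - c))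
            (ae_of_all _ fun x hx => hx.2)
      _ = ∫ x in (ball 0 R)ᶜ, g x ∂μ := by
          rw [← hpre]
          exact (measurePreserving_sub_right μ c).setIntegral_preimage_emb
            (measurableEmbedding_subRight c) g _
  rw [← integral_inter_add_sdiff measurableSet_ball hgc.integrableOn]
  exact add_le_add hnear hfar

theorem exists_forall_le_measureReal_inter_ball [ProperSpace V] [IsFiniteMeasureOnCompacts μ]
    {g : V → ℝ} (hg : Integrable g μ) (hg0 : 0 ≤ g) {A : ℝ} (hgA : ∀ x, g x ≤ A) {S : Set V}
    {κ : ℝ} (hκ : 0 < κ) (hS : ∀ c, κ ≤ ∫ x in S, g (x - c) ∂μ) :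
    ∃ R > 0, ∃ δ > 0, ∀ c, δ ≤ μ.real (S ∩ ball c R) := by
  obtain ⟨R, hR, htail⟩ := hg.exists_setIntegral_compl_ball_lt (half_pos hκ)
  refine ⟨R, hR, κ / (2 * max A 1), by positivity, fun c => ?_⟩
  have hmass := (hS c).trans
    (setIntegral_comp_sub_le hg hg0 hgA S c (measure_ball_lt_top (x := c) (r := R)).ne)
  rw [div_le_iff₀ (by positivity)]
  nlinarith [le_max_left A 1, measureReal_nonneg (μ := μ) (s := S ∩ ball c R)]

end TranslatedMass

section Heat

variable {n : ℕ}

theorem heatSol_comp_sub (u₀ : EuclideanSpace ℝ (Fin n) → ℝ) (c : EuclideanSpace ℝ (Fin n))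
    (t : ℝ) (x : EuclideanSpace ℝ (Fin n)) :
    heatSol n (fun y => u₀ (y - c)) t x = heatSol n u₀ t (x - c) := by
  symm
  rw [heatSol, heatSol, ← integral_sub_right_eq_self _ c]
  simp only [sub_sub_sub_cancel_right]

theorem integral_heatSol_comp_sub_sq (u₀ : EuclideanSpace ℝ (Fin n) → ℝ)
    (c : EuclideanSpace ℝ (Fin n)) (t : ℝ) :
    ∫ x, heatSol n (fun y => u₀ (y - c)) t x ^ 2 = ∫ x, heatSol n u₀ t x ^ 2 := by
  simp_rw [heatSol_comp_sub u₀ c]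
  exact integral_sub_right_eq_self (fun x => heatSol n u₀ t x ^ 2) c

theorem stronglyMeasurable_heatSol {u₀ : EuclideanSpace ℝ (Fin n) → ℝ}
    (hu : StronglyMeasurable u₀) (t : ℝ) : StronglyMeasurable (heatSol n u₀ t) := by
  refine StronglyMeasurable.integral_prod_right
    (f := fun x y => (4 * π * t) ^ (-(n : ℝ) / 2) * rexp (-‖x - y‖ ^ 2 / (4 * t)) * u₀ y) ?_
  exact (Continuous.stronglyMeasurable (by fun_prop)).mul (hu.comp_measurable measurable_snd)

theorem integrable_exp_neg_mul_sq_norm {b : ℝ} (hb : 0 < b) :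
    Integrable (fun v : EuclideanSpace ℝ (Fin n) => rexp (-b * ‖v‖ ^ 2)) := by
  have h := (GaussianFourier.integrable_cexp_neg_mul_sq_norm_add
    (b := (b : ℂ)) (by simpa using hb) 0 (0 : EuclideanSpace ℝ (Fin n))).norm
  refine h.congr (ae_of_all _ fun v => ?_)
  simp [Complex.norm_exp, ← Complex.ofReal_pow, ← Complex.ofReal_mul, ← Complex.ofReal_neg]

theorem integral_exp_neg_mul_sq_norm {b : ℝ} (hb : 0 < b) :
    ∫ v : EuclideanSpace ℝ (Fin n), rexp (-b * ‖v‖ ^ 2) = (π / b) ^ ((n : ℝ) / 2) := by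
  rw [GaussianFourier.integral_rexp_neg_mul_sq_norm hb, finrank_euclideanSpace_fin]

theorem memLp_two_exp_neg_sq_norm_sub (c : EuclideanSpace ℝ (Fin n)) :
    MemLp (fun y => rexp (-‖y - c‖ ^ 2)) 2 := by
  rw [memLp_two_iff_integrable_sq (Continuous.aestronglyMeasurable (by fun_prop))]
  refine ((integrable_exp_neg_mul_sq_norm two_pos).comp_sub_right c).congr
    (ae_of_all _ fun y => ?_)
  simp only [← Real.exp_nat_mul]
  ring_nf

theorem integrable_exp_neg_sq_norm :
    Integrable (fun v : EuclideanSpace ℝ (Fin n) => rexp (-‖v‖ ^ 2)) := by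
  simpa using integrable_exp_neg_mul_sq_norm (n := n) one_pos

theorem heatKernel_mul_exp_neg_sq_norm_le {t : ℝ} (ht : 0 < t)
    (x y : EuclideanSpace ℝ (Fin n)) :
    (4 * π * t) ^ (-(n : ℝ) / 2) * rexp (-‖x - y‖ ^ 2 / (4 * t)) * rexp (-‖y‖ ^ 2) ≤
      (4 * π * t) ^ (-(n : ℝ) / 2) * rexp (-‖x‖ ^ 2 / 2) *
        rexp (-(1 / (4 * t) - 1) * ‖x - y‖ ^ 2) := by
  simp only [mul_assoc, ← Real.exp_add]
  refine mul_le_mul_of_nonneg_left (Real.exp_le_exp.mpr ?_) (by positivity)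
  -- `‖x‖² / 2 ≤ ‖x - y‖² + ‖y‖²` trades the Gaussian in `y` for one in `x`
  have hxy : ‖x‖ - ‖y‖ ≤ ‖x - y‖ := norm_sub_norm_le x y
  have : -‖x - y‖ ^ 2 / (4 * t) = -(1 / (4 * t)) * ‖x - y‖ ^ 2 := by ring
  nlinarith [norm_nonneg x, norm_nonneg y, sq_nonneg (‖x - y‖ - ‖y‖)]

section SmallTime

variable {t : ℝ} (ht : 0 < t) (ht' : t ≤ 1 / 8)
include ht ht'

theorem integrable_heatKernel_mul_exp_neg_sq_norm (x : EuclideanSpace ℝ (Fin n)) :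
    Integrable fun y => (4 * π * t) ^ (-(n : ℝ) / 2) * rexp (-‖x - y‖ ^ 2 / (4 * t)) *
      rexp (-‖y‖ ^ 2) := by
  have hb : 0 < 1 / (4 * t) - 1 := by rw [sub_pos, lt_div_iff₀ (by positivity)]; linarith
  refine (((integrable_exp_neg_mul_sq_norm hb).comp_sub_left x).const_mul
    ((4 * π * t) ^ (-(n : ℝ) / 2) * rexp (-‖x‖ ^ 2 / 2))).mono'
    (Continuous.aestronglyMeasurable (by fun_prop)) (ae_of_all _ fun y => ?_)
  rw [Real.norm_of_nonneg (by positivity)]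
  exact heatKernel_mul_exp_neg_sq_norm_le ht x y

theorem heatSol_exp_neg_sq_norm_pos (x : EuclideanSpace ℝ (Fin n)) :
    0 < heatSol n (fun y => rexp (-‖y‖ ^ 2)) t x :=
  integral_pos_of_integrable_nonneg_nonzero (x := x) (by fun_prop)
    (integrable_heatKernel_mul_exp_neg_sq_norm ht ht' x) (fun y => by positivity)
    (by positivity)

theorem heatSol_exp_neg_sq_norm_le (x : EuclideanSpace ℝ (Fin n)) :
    heatSol n (fun y => rexp (-‖y‖ ^ 2)) t x ≤ 2 ^ ((n : ℝ) / 2) * rexp (-‖x‖ ^ 2 / 2) := by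
  have h4t : 0 < 1 - 4 * t := by linarith
  have hb : 0 < 1 / (4 * t) - 1 := by rw [sub_pos, lt_div_iff₀ (by positivity)]; linarith
  have hmass : ∫ y, rexp (-(1 / (4 * t) - 1) * ‖x - y‖ ^ 2) =
      (π / (1 / (4 * t) - 1)) ^ ((n : ℝ) / 2) := by
    rw [integral_sub_left_eq_self
      (fun v : EuclideanSpace ℝ (Fin n) => rexp (-(1 / (4 * t) - 1) * ‖v‖ ^ 2)),
      integral_exp_neg_mul_sq_norm hb]
  have hconst : (4 * π * t) ^ (-(n : ℝ) / 2) * (π / (1 / (4 * t) - 1)) ^ ((n : ℝ) / 2) =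
      (1 - 4 * t)⁻¹ ^ ((n : ℝ) / 2) := by
    rw [neg_div, Real.rpow_neg (by positivity), ← Real.inv_rpow (by positivity),
      ← Real.mul_rpow (by positivity) (by positivity)]
    congr 1
    field_simp
  calc heatSol n (fun y => rexp (-‖y‖ ^ 2)) t x
      ≤ ∫ y, (4 * π * t) ^ (-(n : ℝ) / 2) * rexp (-‖x‖ ^ 2 / 2) *
        rexp (-(1 / (4 * t) - 1) * ‖x - y‖ ^ 2) :=
        integral_mono_of_nonneg (ae_of_all _ fun y => by positivity)
          (((integrable_exp_neg_mul_sq_norm hb).comp_sub_left x).const_mul _)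
          (ae_of_all _ (heatKernel_mul_exp_neg_sq_norm_le ht x))
    _ = (1 - 4 * t)⁻¹ ^ ((n : ℝ) / 2) * rexp (-‖x‖ ^ 2 / 2) := by
        rw [integral_const_mul, hmass, ← hconst]; ring
    _ ≤ 2 ^ ((n : ℝ) / 2) * rexp (-‖x‖ ^ 2 / 2) := by
        gcongr
        rw [inv_le_comm₀ h4t two_pos]
        linarith

theorem heatSol_exp_neg_sq_norm_sq_le (x : EuclideanSpace ℝ (Fin n)) :
    heatSol n (fun y => rexp (-‖y‖ ^ 2)) t x ^ 2 ≤ 2 ^ n * rexp (-‖x‖ ^ 2) := by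
  calc heatSol n (fun y => rexp (-‖y‖ ^ 2)) t x ^ 2
      ≤ (2 ^ ((n : ℝ) / 2) * rexp (-‖x‖ ^ 2 / 2)) ^ 2 :=
        pow_le_pow_left₀ (heatSol_exp_neg_sq_norm_pos ht ht' x).le
          (heatSol_exp_neg_sq_norm_le ht ht' x) 2
    _ = 2 ^ n * rexp (-‖x‖ ^ 2) := by
        rw [mul_pow, ← Real.rpow_natCast _ 2, ← Real.rpow_mul zero_le_two, ← Real.exp_nat_mul]
        norm_num
        ring_nf

theorem integrable_heatSol_exp_neg_sq_norm_sq :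
    Integrable fun x : EuclideanSpace ℝ (Fin n) =>
      heatSol n (fun y => rexp (-‖y‖ ^ 2)) t x ^ 2 := by
  refine (integrable_exp_neg_sq_norm.const_mul ((2 : ℝ) ^ n)).mono' ((stronglyMeasurable_heatSol
    (Continuous.stronglyMeasurable (by fun_prop)) t).aestronglyMeasurable.pow 2)
    (ae_of_all _ fun x => ?_)
  rw [Real.norm_of_nonneg (sq_nonneg _)]
  exact heatSol_exp_neg_sq_norm_sq_le ht ht' x

theorem integral_heatSol_exp_neg_sq_norm_sq_pos :
    0 < ∫ x : EuclideanSpace ℝ (Fin n), heatSol n (fun y => rexp (-‖y‖ ^ 2)) t x ^ 2 := by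
  rw [integral_pos_iff_support_of_nonneg (fun x => sq_nonneg _)
    (integrable_heatSol_exp_neg_sq_norm_sq ht ht')]
  have hsupp : Function.support (fun x : EuclideanSpace ℝ (Fin n) =>
      heatSol n (fun y => rexp (-‖y‖ ^ 2)) t x ^ 2) = univ :=
    Function.support_eq_univ fun x => (pow_pos (heatSol_exp_neg_sq_norm_pos ht ht' x) 2).ne'
  rw [hsupp]
  exact isOpen_univ.measure_pos volume univ_nonempty

theorem heatSol_exp_neg_sq_norm_sub_sq_le (c x : EuclideanSpace ℝ (Fin n)) :
    heatSol n (fun y => rexp (-‖y - c‖ ^ 2)) t x ^ 2 ≤ 2 ^ n * rexp (-‖x - c‖ ^ 2) := by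
  rw [heatSol_comp_sub (fun y => rexp (-‖y‖ ^ 2))]
  exact heatSol_exp_neg_sq_norm_sq_le ht ht' (x - c)

end SmallTime

theorem setIntegral_Ioo_setIntegral_heatSol_exp_neg_sq_norm_sub_sq_le
    (S : Set (EuclideanSpace ℝ (Fin n))) (c : EuclideanSpace ℝ (Fin n)) {T : ℝ} (hT : 0 < T)
    (hT' : T ≤ 1 / 8) :
    ∫ t in Ioo 0 T, ∫ x in S, heatSol n (fun y => rexp (-‖y - c‖ ^ 2)) t x ^ 2 ≤
      T * ∫ x in S, 2 ^ n * rexp (-‖x - c‖ ^ 2) := by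
  have hmaj : IntegrableOn (fun x => (2 : ℝ) ^ n * rexp (-‖x - c‖ ^ 2)) S :=
    ((integrable_exp_neg_sq_norm.comp_sub_right c).const_mul _).integrableOn
  have hslice : ∀ t ∈ Ioo 0 T,
      ‖∫ x in S, heatSol n (fun y => rexp (-‖y - c‖ ^ 2)) t x ^ 2‖ ≤
        ∫ x in S, 2 ^ n * rexp (-‖x - c‖ ^ 2) := fun t ⟨ht, htT⟩ => by
    rw [Real.norm_of_nonneg (integral_nonneg fun x => sq_nonneg _)]
    exact integral_mono_of_nonneg (ae_of_all _ fun x => sq_nonneg _) hmaj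
      (ae_of_all _ (heatSol_exp_neg_sq_norm_sub_sq_le ht (htT.le.trans hT') c))
  have := norm_setIntegral_le_of_norm_le_const (measure_Ioo_lt_top (μ := volume)) hslice
  rw [Real.volume_real_Ioo_of_le hT.le, sub_zero, mul_comm] at this
  exact (le_norm_self _).trans this

end Heat

theorem isThick_of_le_measureReal_inter_ball {n : ℕ} {E : Set (EuclideanSpace ℝ (Fin n))}
    {δ R : ℝ} (hR : 0 < R) (h : ∀ c, δ ≤ volume.real (E ∩ ball c R)) :
    IsThick n E (δ / (2 * R) ^ n) (2 * R) := by
  intro x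
  rw [div_mul_cancel₀ δ (by positivity)]
  have hball : ball x R ⊆ {y | ∀ i, |y i - x i| < 2 * R / 2} := fun y hy i => by
    rw [mul_div_cancel_left₀ R two_ne_zero]
    calc |y i - x i| = ‖(y - x) i‖ := rfl
      _ ≤ ‖y - x‖ := PiLp.norm_apply_le _ _
      _ < R := mem_ball_iff_norm.mp hy
  exact (ENNReal.ofReal_le_of_le_toReal (h x)).trans
    (measure_mono (inter_subset_inter_right E hball))

theorem thick_of_observability_general (n : ℕ)
    (E : Set (EuclideanSpace ℝ (Fin n)))
    (hobs : ∀ T > (0:ℝ), ∃ Cobs > (0:ℝ),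
      ∀ u₀ : EuclideanSpace ℝ (Fin n) → ℝ, MemLp u₀ 2 volume →
        ∫ x, heatSol n u₀ T x ^ 2 ≤
          Cobs * ∫ t in Ioo (0:ℝ) T, ∫ x in E, heatSol n u₀ t x ^ 2) :
    ∃ γ > (0:ℝ), ∃ L > (0:ℝ), IsThick n E γ L := by
  obtain ⟨Cobs, hCobs, hineq⟩ := hobs (1 / 8) (by norm_num)
  set G : EuclideanSpace ℝ (Fin n) → ℝ := fun y => rexp (-‖y‖ ^ 2)
  have hmass : ∀ c, (∫ x, heatSol n G (1 / 8) x ^ 2) / (Cobs * (1 / 8)) ≤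
      ∫ x in E, 2 ^ n * G (x - c) := fun c => by
    rw [div_le_iff₀ (by positivity), ← integral_heatSol_comp_sub_sq G c]
    calc _ ≤ Cobs * ∫ t in Ioo 0 (1 / 8), ∫ x in E, heatSol n (fun y => G (y - c)) t x ^ 2 :=
          hineq _ (memLp_two_exp_neg_sq_norm_sub c)
      _ ≤ Cobs * (1 / 8 * ∫ x in E, 2 ^ n * G (x - c)) := by
          gcongr
          exact setIntegral_Ioo_setIntegral_heatSol_exp_neg_sq_norm_sub_sq_le E c
            (by norm_num) le_rfl
      _ = _ := by ring
  have hG_le_one : ∀ x, G x ≤ 1 := fun x => Real.exp_le_one_iff.mpr (by simp)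
  obtain ⟨R, hR, δ, hδ, hvol⟩ := exists_forall_le_measureReal_inter_ball
    (integrable_exp_neg_sq_norm.const_mul _) (fun x => by positivity)
    (fun x => mul_le_of_le_one_right (by positivity) (hG_le_one x))
    (div_pos (integral_heatSol_exp_neg_sq_norm_sq_pos (by norm_num) le_rfl) (by positivity)) hmass
  exact ⟨_, by positivity, _, by positivity, isThick_of_le_measureReal_inter_ball hR hvol⟩

/-- If `E` satisfies the observability inequality for the heat equation then `E` is
`γ`-thick at scale `L` for some `γ > 0` and `L > 0`. -/
theorem thick_of_observability (n : ℕ) (hn : 0 < n)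
    (E : Set (EuclideanSpace ℝ (Fin n))) (hE : MeasurableSet E)
    (hobs : ∀ T > (0:ℝ), ∃ Cobs > (0:ℝ),
      ∀ u₀ : EuclideanSpace ℝ (Fin n) → ℝ, MemLp u₀ 2 volume →
        ∫ x, heatSol n u₀ T x ^ 2 ≤
          Cobs * ∫ t in Ioo (0:ℝ) T, ∫ x in E, heatSol n u₀ t x ^ 2) :
    ∃ γ > (0:ℝ), ∃ L > (0:ℝ), IsThick n E γ L :=
  thick_of_observability_general n E hobs
end
end

section
/- Let a > 0 and 0 < ν ≤ 1. Then for every u₀ ∈ L²(e^{a|x|^ν}dx) and every t > 0, the heat semigroup satisfies ( ∫_{ℝⁿ} |(e^{tΔ}u₀)(x)|² e^{a|x|^ν} dx )^{1/2} ≤ 2^{n/2} e^{a^{2/(2−ν)} t^{ν/(2−ν)}} ( ∫_{ℝⁿ} |u₀(x)|² e^{a|x|^ν} dx )^{1/2}. -/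
open MeasureTheory Real Set

noncomputable section

/-!
Write `K_t` for the heat kernel and `C = a^{2/(2-ν)} t^{ν/(2-ν)}`. Since `ν ≤ 1`, `|x|^ν` is
subadditive, and Young's inequality `a r^ν / 2 ≤ r² / (8t) + C` lets half of the Gaussian decay
of `K_t(x - y)` absorb the growth of the weight from `y` to `x`. As
`K_t(z) = 2^{n/2} K_{2t}(z) e^{-|z|²/(8t)}`, this gives
`e^{a|x|^ν/2} |e^{tΔ}u₀(x)| ≤ 2^{n/2} e^C (K_{2t} ⋆ e^{a|·|^ν/2}|u₀|)(x)`,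
and Young's convolution inequality `‖K ⋆ f‖₂ ≤ ‖K‖₁ ‖f‖₂` with `‖K_{2t}‖₁ = 1` concludes.
-/

open scoped ENNReal

theorem rpow_le_mul_sq_add {ν lam r : ℝ} (hν₀ : 0 < ν) (hν₂ : ν < 2) (hlam : 0 < lam)
    (hr : 0 ≤ r) :
    r ^ ν ≤ ν / 2 * (lam * r ^ 2) + (2 - ν) / 2 * lam ^ (-(ν / (2 - ν))) := by
  have h2ν : 0 < 2 - ν := by linarith
  have hmean : r ^ ν = (lam * r ^ 2) ^ (ν / 2) * (lam ^ (-(ν / (2 - ν)))) ^ ((2 - ν) / 2) := by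
    rw [mul_rpow hlam.le (by positivity), ← rpow_natCast r 2, ← rpow_mul hr,
      ← rpow_mul hlam.le, mul_right_comm, ← rpow_add hlam]
    field_simp
    simp
  rw [hmean]
  exact geom_mean_le_arith_mean2_weighted (by positivity) (by positivity) (by positivity)
    (by positivity) (by ring)

theorem mul_rpow_div_two_le {a ν t r : ℝ} (ha : 0 < a) (hν₀ : 0 < ν) (hν₁ : ν ≤ 1)
    (ht : 0 < t) (hr : 0 ≤ r) :
    a * r ^ ν / 2 ≤ r ^ 2 / (8 * t) + a ^ (2 / (2 - ν)) * t ^ (ν / (2 - ν)) := by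
  have h2ν : 0 < 2 - ν := by linarith
  set β := ν / (2 - ν) with hβ
  have hβ1 : β ≤ 1 := by rw [hβ, div_le_one h2ν]; linarith
  -- the choice `λ = (2aνt)⁻¹` makes the quadratic term equal to `r² / (8t)`
  have hamgm := rpow_le_mul_sq_add hν₀ (by linarith) (by positivity : 0 < (2 * a * ν * t)⁻¹) hr
  have hconst : (2 * a * ν * t)⁻¹ ^ (-β) = (2 * ν) ^ β * (a ^ β * t ^ β) := by
    rw [inv_rpow (by positivity), rpow_neg (by positivity), inv_inv,
      show 2 * a * ν * t = 2 * ν * (a * t) by ring, mul_rpow (by positivity) (by positivity),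
      mul_rpow ha.le ht.le]
  have hexp : a ^ (2 / (2 - ν)) = a * a ^ β := by
    rw [show 2 / (2 - ν) = 1 + β by rw [hβ]; field_simp; ring, rpow_add ha, rpow_one]
  have hfactor : (2 - ν) * (2 * ν) ^ β ≤ 4 := by
    have : (2 * ν) ^ β ≤ 2 := calc
      (2 * ν) ^ β ≤ 2 ^ β := rpow_le_rpow (by positivity) (by linarith) (by positivity)
      _ ≤ 2 ^ (1 : ℝ) := rpow_le_rpow_of_exponent_le one_le_two hβ1
      _ = 2 := rpow_one 2
    nlinarith [rpow_nonneg (by positivity : (0:ℝ) ≤ 2 * ν) β]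
  rw [hconst] at hamgm
  rw [hexp]
  calc a * r ^ ν / 2 ≤ a / 2 * (ν / 2 * ((2 * a * ν * t)⁻¹ * r ^ 2) +
        (2 - ν) / 2 * ((2 * ν) ^ β * (a ^ β * t ^ β))) := by
        linarith [mul_le_mul_of_nonneg_left hamgm (by positivity : (0 : ℝ) ≤ a / 2)]
    _ = r ^ 2 / (8 * t) + a * (a ^ β * t ^ β) * ((2 - ν) * (2 * ν) ^ β / 4) := by
        field_simp; ring
    _ ≤ r ^ 2 / (8 * t) + a * (a ^ β * t ^ β) := by
        gcongr r ^ 2 / (8 * t) + ?_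
        exact mul_le_of_le_one_right (by positivity) (by linarith)
    _ = _ := by ring

theorem sq_lintegral_mul_le {α : Type*} [MeasurableSpace α] (μ : Measure α) {g f : α → ℝ≥0∞}
    (hg : AEMeasurable g μ) (hf : AEMeasurable f μ) :
    (∫⁻ x, g x * f x ∂μ) ^ 2 ≤ (∫⁻ x, g x ∂μ) * ∫⁻ x, g x * f x ^ 2 ∂μ := by
  have hsqrt : ∀ x, g x ^ (1 / 2 : ℝ) * (g x ^ (1 / 2 : ℝ) * f x) = g x * f x := fun x => by
    rw [← mul_assoc, ← ENNReal.rpow_add_of_nonneg _ _ (by norm_num) (by norm_num)]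
    norm_num
  have hholder := ENNReal.lintegral_mul_le_Lp_mul_Lq μ Real.HolderConjugate.two_two
    (hg.pow_const (1 / 2 : ℝ)) ((hg.pow_const (1 / 2 : ℝ)).mul hf)
  have hsq_g : ∀ x, (g x ^ (1 / 2 : ℝ)) ^ (2 : ℝ) = g x := fun x => by
    rw [← ENNReal.rpow_mul]; norm_num
  have hsq_gf : ∀ x, (g x ^ (1 / 2 : ℝ) * f x) ^ (2 : ℝ) = g x * f x ^ 2 := fun x => by
    rw [ENNReal.mul_rpow_of_nonneg _ _ zero_le_two, hsq_g, ENNReal.rpow_two]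
  simp only [Pi.mul_apply, hsqrt, hsq_g, hsq_gf] at hholder
  calc (∫⁻ x, g x * f x ∂μ) ^ 2
      ≤ ((∫⁻ x, g x ∂μ) ^ (1 / 2 : ℝ) * (∫⁻ x, g x * f x ^ 2 ∂μ) ^ (1 / 2 : ℝ)) ^ 2 := by
        gcongr
    _ = (∫⁻ x, g x ∂μ) * ∫⁻ x, g x * f x ^ 2 ∂μ := by
        rw [mul_pow, ← ENNReal.rpow_natCast, ← ENNReal.rpow_natCast, ← ENNReal.rpow_mul,
          ← ENNReal.rpow_mul]
        norm_num

theorem lintegral_lconvolution_sq_le {G : Type*} [AddCommGroup G] [MeasurableSpace G]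
    [MeasurableAdd₂ G] [MeasurableNeg G] {μ : Measure G} [SFinite μ] [μ.IsAddLeftInvariant]
    {f g : G → ℝ≥0∞} (hf : AEMeasurable f μ) (hg : AEMeasurable g μ) :
    ∫⁻ x, (f ⋆ₗ[μ] g) x ^ 2 ∂μ ≤ (∫⁻ x, f x ∂μ) ^ 2 * ∫⁻ x, g x ^ 2 ∂μ := by
  have hg_translate (x : G) : AEMeasurable (fun y => g (-y + x)) μ := by
    simp_rw [neg_add_eq_sub]
    exact hg.comp_quasiMeasurePreserving (quasiMeasurePreserving_sub_left μ x)
  calc ∫⁻ x, (f ⋆ₗ[μ] g) x ^ 2 ∂μ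
      ≤ ∫⁻ x, (∫⁻ y, f y ∂μ) * ∫⁻ y, f y * g (-y + x) ^ 2 ∂μ ∂μ :=
        lintegral_mono fun x => sq_lintegral_mul_le μ hf (hg_translate x)
    _ = (∫⁻ y, f y ∂μ) * ∫⁻ y, f y * ∫⁻ x, g (-y + x) ^ 2 ∂μ ∂μ := by
        rw [lintegral_const_mul'' _ (by fun_prop), lintegral_lintegral_swap (by fun_prop)]
        refine congrArg _ (lintegral_congr fun y => lintegral_const_mul'' _ ?_)
        exact (hg.comp_quasiMeasurePreserving
          (measurePreserving_add_left μ (-y)).quasiMeasurePreserving).pow_const 2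
    _ = (∫⁻ x, f x ∂μ) ^ 2 * ∫⁻ x, g x ^ 2 ∂μ := by
        have htranslate (y : G) : ∫⁻ x, g (-y + x) ^ 2 ∂μ = ∫⁻ x, g x ^ 2 ∂μ :=
          lintegral_add_left_eq_self (fun z => g z ^ 2) (-y)
        rw [lintegral_congr fun y => congrArg (f y * ·) (htranslate y), lintegral_mul_const'' _ hf]
        ring

def heatKernel (n : ℕ) (t : ℝ) (z : EuclideanSpace ℝ (Fin n)) : ℝ :=
  (4 * π * t) ^ (-(n : ℝ) / 2) * Real.exp (-‖z‖ ^ 2 / (4 * t))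

theorem heatSol_eq_integral_heatKernel {n : ℕ} {t : ℝ} (u₀ : EuclideanSpace ℝ (Fin n) → ℝ)
    (x : EuclideanSpace ℝ (Fin n)) : heatSol n u₀ t x = ∫ y, heatKernel n t (x - y) * u₀ y :=
  rfl

namespace heatKernel

variable {n : ℕ} {t : ℝ}

theorem pos (ht : 0 < t) (z : EuclideanSpace ℝ (Fin n)) : 0 < heatKernel n t z := by
  unfold heatKernel; positivity

theorem integral_eq_one (ht : 0 < t) : ∫ z, heatKernel n t z = 1 := by
  have h4πt : 0 < 4 * π * t := by positivity
  simp_rw [heatKernel, neg_div, div_eq_inv_mul (‖_‖ ^ 2), ← neg_mul]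
  rw [integral_const_mul, GaussianFourier.integral_rexp_neg_mul_sq_norm (by positivity),
    finrank_euclideanSpace_fin, div_inv_eq_mul, show π * (4 * t) = 4 * π * t by ring,
    rpow_neg h4πt.le, inv_mul_cancel₀ (by positivity)]

theorem lintegral_ofReal_eq_one (ht : 0 < t) : ∫⁻ z, ENNReal.ofReal (heatKernel n t z) = 1 := by
  rw [← ofReal_integral_eq_lintegral_ofReal, integral_eq_one ht, ENNReal.ofReal_one]
  · exact .of_integral_ne_zero (by simp [integral_eq_one ht])
  · exact .of_forall fun z => (pos ht z).le

theorem eq_two_rpow_mul_mul_exp (ht : 0 < t) (z : EuclideanSpace ℝ (Fin n)) :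
    heatKernel n t z = 2 ^ ((n : ℝ) / 2) * heatKernel n (2 * t) z * rexp (-‖z‖ ^ 2 / (8 * t)) := by
  have hgauss : rexp (-‖z‖ ^ 2 / (4 * t)) =
      rexp (-‖z‖ ^ 2 / (4 * (2 * t))) * rexp (-‖z‖ ^ 2 / (8 * t)) := by
    rw [← exp_add]; congr 1; field_simp; ring
  have hnorm : (2 : ℝ) ^ ((n : ℝ) / 2) * (4 * π * (2 * t)) ^ (-(n : ℝ) / 2) =
      (4 * π * t) ^ (-(n : ℝ) / 2) := by
    rw [show 4 * π * (2 * t) = 2 * (4 * π * t) by ring, mul_rpow zero_le_two (by positivity),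
      ← mul_assoc, ← rpow_add two_pos, neg_div, add_neg_cancel, rpow_zero, one_mul]
  rw [heatKernel, heatKernel, hgauss, ← hnorm]
  ring

end heatKernel

theorem mul_norm_rpow_div_two_le {E : Type*} [SeminormedAddCommGroup E] {a ν t : ℝ} (ha : 0 < a)
    (hν₀ : 0 < ν) (hν₁ : ν ≤ 1) (ht : 0 < t) (x y : E) :
    a * ‖x‖ ^ ν / 2 ≤
      ‖x - y‖ ^ 2 / (8 * t) + a ^ (2 / (2 - ν)) * t ^ (ν / (2 - ν)) + a * ‖y‖ ^ ν / 2 := by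
  have hsub : ‖x‖ ^ ν ≤ ‖x - y‖ ^ ν + ‖y‖ ^ ν := calc
    ‖x‖ ^ ν ≤ (‖x - y‖ + ‖y‖) ^ ν :=
      rpow_le_rpow (norm_nonneg _) (by simpa using norm_add_le (x - y) y) hν₀.le
    _ ≤ ‖x - y‖ ^ ν + ‖y‖ ^ ν :=
      rpow_add_le_add_rpow (norm_nonneg _) (norm_nonneg _) hν₀.le hν₁
  have := mul_rpow_div_two_le ha hν₀ hν₁ ht (norm_nonneg (x - y))
  nlinarith

theorem heatKernel_mul_exp_le {n : ℕ} {a ν t : ℝ} (ha : 0 < a) (hν₀ : 0 < ν) (hν₁ : ν ≤ 1)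
    (ht : 0 < t) (x y : EuclideanSpace ℝ (Fin n)) :
    heatKernel n t (x - y) * rexp (a * ‖x‖ ^ ν / 2) ≤
      2 ^ ((n : ℝ) / 2) * rexp (a ^ (2 / (2 - ν)) * t ^ (ν / (2 - ν))) *
        heatKernel n (2 * t) (x - y) * rexp (a * ‖y‖ ^ ν / 2) := by
  have hexp : rexp (-‖x - y‖ ^ 2 / (8 * t)) * rexp (a * ‖x‖ ^ ν / 2) ≤
      rexp (a ^ (2 / (2 - ν)) * t ^ (ν / (2 - ν))) * rexp (a * ‖y‖ ^ ν / 2) := by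
    rw [← exp_add, ← exp_add, exp_le_exp, neg_div]
    linarith [mul_norm_rpow_div_two_le ha hν₀ hν₁ ht x y]
  have hK : 0 ≤ 2 ^ ((n : ℝ) / 2) * heatKernel n (2 * t) (x - y) :=
    mul_nonneg (by positivity) (heatKernel.pos (by positivity) _).le
  rw [heatKernel.eq_two_rpow_mul_mul_exp ht]
  calc _ = 2 ^ ((n : ℝ) / 2) * heatKernel n (2 * t) (x - y) *
        (rexp (-‖x - y‖ ^ 2 / (8 * t)) * rexp (a * ‖x‖ ^ ν / 2)) := by ring
    _ ≤ 2 ^ ((n : ℝ) / 2) * heatKernel n (2 * t) (x - y) *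
        (rexp (a ^ (2 / (2 - ν)) * t ^ (ν / (2 - ν))) * rexp (a * ‖y‖ ^ ν / 2)) :=
      mul_le_mul_of_nonneg_left hexp hK
    _ = _ := by ring

theorem ofReal_abs_heatSol_mul_exp_le_lconvolution {n : ℕ} {a ν t : ℝ} (ha : 0 < a)
    (hν₀ : 0 < ν) (hν₁ : ν ≤ 1) (ht : 0 < t) (u₀ : EuclideanSpace ℝ (Fin n) → ℝ)
    (x : EuclideanSpace ℝ (Fin n)) :
    ENNReal.ofReal (|heatSol n u₀ t x| * rexp (a * ‖x‖ ^ ν / 2)) ≤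
      ((fun z => ENNReal.ofReal (2 ^ ((n : ℝ) / 2) *
          rexp (a ^ (2 / (2 - ν)) * t ^ (ν / (2 - ν))) * heatKernel n (2 * t) z)) ⋆ₗ
        fun y => ENNReal.ofReal (|u₀ y| * rexp (a * ‖y‖ ^ ν / 2))) x := by
  rw [lconvolution_comm, lconvolution_def, ENNReal.ofReal_mul (abs_nonneg _),
    heatSol_eq_integral_heatKernel, ← Real.enorm_eq_ofReal_abs]
  calc ‖∫ y, heatKernel n t (x - y) * u₀ y‖ₑ * ENNReal.ofReal (rexp (a * ‖x‖ ^ ν / 2))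
      ≤ (∫⁻ y, ‖heatKernel n t (x - y) * u₀ y‖ₑ) * ENNReal.ofReal (rexp (a * ‖x‖ ^ ν / 2)) := by
        gcongr
        exact enorm_integral_le_lintegral_enorm _
    _ = ∫⁻ y, ‖heatKernel n t (x - y) * u₀ y‖ₑ * ENNReal.ofReal (rexp (a * ‖x‖ ^ ν / 2)) :=
        (lintegral_mul_const' _ _ ENNReal.ofReal_ne_top).symm
    _ ≤ _ := by
        refine lintegral_mono fun y => ?_
        rw [Real.enorm_eq_ofReal_abs, ← ENNReal.ofReal_mul (abs_nonneg _),
          ← ENNReal.ofReal_mul (by positivity), neg_add_eq_sub, abs_mul,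
          abs_of_pos (heatKernel.pos ht _)]
        refine ENNReal.ofReal_le_ofReal ?_
        calc _ = heatKernel n t (x - y) * rexp (a * ‖x‖ ^ ν / 2) * |u₀ y| := by ring
          _ ≤ _ := mul_le_mul_of_nonneg_right (heatKernel_mul_exp_le ha hν₀ hν₁ ht x y)
              (abs_nonneg _)
          _ = _ := by ring

theorem sqrt_sq_mul_exp (s c : ℝ) : √(s ^ 2 * rexp c) = |s| * rexp (c / 2) := by
  rw [sqrt_mul (sq_nonneg s), sqrt_sq_eq_abs, exp_half]

theorem ofReal_sq_mul_exp (s c : ℝ) :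
    ENNReal.ofReal (s ^ 2 * rexp c) = ENNReal.ofReal (|s| * rexp (c / 2)) ^ 2 := by
  rw [← sqrt_sq_mul_exp, ← ENNReal.ofReal_pow (sqrt_nonneg _), sq_sqrt (by positivity)]

theorem lintegral_heatSol_sq_mul_exp_le {n : ℕ} {a ν t : ℝ} (ha : 0 < a) (hν₀ : 0 < ν)
    (hν₁ : ν ≤ 1) (ht : 0 < t) {u₀ : EuclideanSpace ℝ (Fin n) → ℝ}
    (hu₀ : AEStronglyMeasurable (fun x => u₀ x ^ 2 * rexp (a * ‖x‖ ^ ν))) :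
    ∫⁻ x, ENNReal.ofReal (heatSol n u₀ t x ^ 2 * rexp (a * ‖x‖ ^ ν)) ≤
      ENNReal.ofReal (2 ^ ((n : ℝ) / 2) * rexp (a ^ (2 / (2 - ν)) * t ^ (ν / (2 - ν)))) ^ 2 *
        ∫⁻ x, ENNReal.ofReal (u₀ x ^ 2 * rexp (a * ‖x‖ ^ ν)) := by
  set M := 2 ^ ((n : ℝ) / 2) * rexp (a ^ (2 / (2 - ν)) * t ^ (ν / (2 - ν)))
  set G := fun z => ENNReal.ofReal (M * heatKernel n (2 * t) z)
  set F := fun y => ENNReal.ofReal (|u₀ y| * rexp (a * ‖y‖ ^ ν / 2))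
  have hG : Measurable G := by unfold G heatKernel; fun_prop
  have hF : AEMeasurable F := by
    simp_rw [F, ← sqrt_sq_mul_exp]
    exact hu₀.aemeasurable.sqrt.ennreal_ofReal
  have hGint : ∫⁻ z, G z = ENNReal.ofReal M := by
    simp_rw [G, ENNReal.ofReal_mul (by positivity : 0 ≤ M)]
    rw [lintegral_const_mul _ (by unfold heatKernel; fun_prop),
      heatKernel.lintegral_ofReal_eq_one (by positivity), mul_one]
  calc ∫⁻ x, ENNReal.ofReal (heatSol n u₀ t x ^ 2 * rexp (a * ‖x‖ ^ ν))
      = ∫⁻ x, ENNReal.ofReal (|heatSol n u₀ t x| * rexp (a * ‖x‖ ^ ν / 2)) ^ 2 := by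
        simp_rw [ofReal_sq_mul_exp]
    _ ≤ ∫⁻ x, (G ⋆ₗ F) x ^ 2 := by
        gcongr with x
        exact ofReal_abs_heatSol_mul_exp_le_lconvolution ha hν₀ hν₁ ht u₀ x
    _ ≤ (∫⁻ z, G z) ^ 2 * ∫⁻ y, F y ^ 2 := lintegral_lconvolution_sq_le hG.aemeasurable hF
    _ = _ := by
        simp_rw [hGint, F, ← ofReal_sq_mul_exp]

theorem integral_le_mul_integral_of_lintegral_le {α : Type*} [MeasurableSpace α] {μ : Measure α}
    {f g : α → ℝ} {c : ℝ} (hf : ∀ x, 0 ≤ f x) (hg : ∀ x, 0 ≤ g x) (hg_int : Integrable g μ)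
    (hc : 0 ≤ c)
    (h : ∫⁻ x, ENNReal.ofReal (f x) ∂μ ≤ ENNReal.ofReal c * ∫⁻ x, ENNReal.ofReal (g x) ∂μ) :
    ∫ x, f x ∂μ ≤ c * ∫ x, g x ∂μ := by
  rw [← ofReal_integral_eq_lintegral_ofReal hg_int (.of_forall hg), ← ENNReal.ofReal_mul hc] at h
  calc ∫ x, f x ∂μ ≤ (∫⁻ x, ENNReal.ofReal ‖f x‖ ∂μ).toReal := by
        simpa using (le_abs_self _).trans (norm_integral_le_lintegral_norm (μ := μ) f)
    _ ≤ c * ∫ x, g x ∂μ := by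
        simp_rw [Real.norm_of_nonneg (hf _)]
        exact ENNReal.toReal_le_of_le_ofReal (mul_nonneg hc (integral_nonneg hg)) h

theorem heat_semigroup_persistence_exp_weight_general (n : ℕ)
    (a ν : ℝ) (ha : 0 < a) (hν₀ : 0 < ν) (hν₁ : ν ≤ 1)
    (u₀ : EuclideanSpace ℝ (Fin n) → ℝ)
    (hu₀ : Integrable (fun x => u₀ x ^ 2 * Real.exp (a * ‖x‖ ^ ν)))
    (t : ℝ) (ht : 0 < t) :
    (∫ x, heatSol n u₀ t x ^ 2 * Real.exp (a * ‖x‖ ^ ν)) ^ (1/2 : ℝ) ≤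
      2 ^ ((n : ℝ) / 2) * Real.exp (a ^ (2 / (2 - ν)) * t ^ (ν / (2 - ν))) *
        (∫ x, u₀ x ^ 2 * Real.exp (a * ‖x‖ ^ ν)) ^ (1/2 : ℝ) := by
  set M := 2 ^ ((n : ℝ) / 2) * rexp (a ^ (2 / (2 - ν)) * t ^ (ν / (2 - ν)))
  have hM : 0 ≤ M := by positivity
  have hsq : ∫ x, heatSol n u₀ t x ^ 2 * rexp (a * ‖x‖ ^ ν) ≤
      M ^ 2 * ∫ x, u₀ x ^ 2 * rexp (a * ‖x‖ ^ ν) := by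
    refine integral_le_mul_integral_of_lintegral_le (fun x => by positivity)
      (fun x => by positivity) hu₀ (by positivity) ?_
    rw [ENNReal.ofReal_pow hM]
    exact lintegral_heatSol_sq_mul_exp_le ha hν₀ hν₁ ht hu₀.aestronglyMeasurable
  calc (∫ x, heatSol n u₀ t x ^ 2 * rexp (a * ‖x‖ ^ ν)) ^ (1/2 : ℝ)
      ≤ (M ^ 2 * ∫ x, u₀ x ^ 2 * rexp (a * ‖x‖ ^ ν)) ^ (1/2 : ℝ) :=
        rpow_le_rpow (integral_nonneg fun x => by positivity) hsq (by norm_num)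
    _ = M * (∫ x, u₀ x ^ 2 * rexp (a * ‖x‖ ^ ν)) ^ (1/2 : ℝ) := by
        rw [mul_rpow (by positivity) (integral_nonneg fun x => by positivity), ← sqrt_eq_rpow,
          sqrt_sq hM]

/-- Persistence of the heat semigroup in the weighted space `L²(e^{a|x|^ν} dx)`,
`0 < ν ≤ 1`. -/
theorem heat_semigroup_persistence_exp_weight (n : ℕ) (hn : 0 < n)
    (a ν : ℝ) (ha : 0 < a) (hν₀ : 0 < ν) (hν₁ : ν ≤ 1)
    (u₀ : EuclideanSpace ℝ (Fin n) → ℝ)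
    (hu₀ : Integrable (fun x => u₀ x ^ 2 * Real.exp (a * ‖x‖ ^ ν)))
    (t : ℝ) (ht : 0 < t) :
    (∫ x, heatSol n u₀ t x ^ 2 * Real.exp (a * ‖x‖ ^ ν)) ^ (1/2 : ℝ) ≤
      2 ^ ((n : ℝ) / 2) * Real.exp (a ^ (2 / (2 - ν)) * t ^ (ν / (2 - ν))) *
        (∫ x, u₀ x ^ 2 * Real.exp (a * ‖x‖ ^ ν)) ^ (1/2 : ℝ) :=
  heat_semigroup_persistence_exp_weight_general n a ν ha hν₀ hν₁ u₀ hu₀ t ht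
end
end

section
/- Let ν > 0, T > 0, and r > 0, and let ρ(x) = ⟨x⟩^{−ν} or ρ(x) = e^{−|x|}. Then there is no constant C > 0 such that every solution u of the heat equation with initial datum in L²(ℝⁿ) satisfies ∫_{ℝⁿ} u(T,x)² ρ(x) dx ≤ C ∫_0^T ∫_{B_r} u(t,x)² dx dt. -/
/-!
The heat flow of the Gaussian `e^{-|y - x₀|²}` is the explicit Gaussian
`(1 + 4t)^{-n/2} e^{-|x - x₀|² / (1 + 4t)}`. Both weights decay at most exponentially,
`ρ(x) ≥ e^{-μ|x|}`, so with `|x₀| = R` the weighted mass at time `T` is at least of order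
`e^{-μR}`, whereas on `B_r` and for `t < T` the square of the solution is at most
`e^{-2(R - r)² / (1 + 4T)}`. Gaussian decay beats exponential decay as `R → ∞`, so no constant
`C` can work.
-/

open MeasureTheory Real Set

noncomputable section

section Gaussian

variable {V : Type*} [NormedAddCommGroup V] [InnerProductSpace ℝ V]

theorem mul_norm_sub_sq_add_mul_norm_sub_sq {a b : ℝ} (hab : a + b ≠ 0) (x y z : V) :
    a * ‖x - y‖ ^ 2 + b * ‖y - z‖ ^ 2 =
      (a + b) * ‖y - (a + b)⁻¹ • (a • x + b • z)‖ ^ 2 + a * b / (a + b) * ‖x - z‖ ^ 2 := by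
  simp only [norm_sub_sq_real, norm_add_sq_real, real_inner_smul_left, real_inner_smul_right,
    inner_add_right, norm_smul, Real.norm_eq_abs, mul_pow, sq_abs]
  rw [real_inner_comm y x, real_inner_comm z x, real_inner_comm z y]
  field_simp
  ring

variable [FiniteDimensional ℝ V] [MeasurableSpace V] [BorelSpace V]

theorem integral_exp_neg_mul_norm_sub_sq {b : ℝ} (hb : 0 < b) (m : V) :
    ∫ y, rexp (-(b * ‖y - m‖ ^ 2)) = (π / b) ^ ((Module.finrank ℝ V : ℝ) / 2) := by
  rw [integral_sub_right_eq_self (fun y ↦ rexp (-(b * ‖y‖ ^ 2))) m]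
  simpa only [neg_mul] using GaussianFourier.integral_rexp_neg_mul_sq_norm (V := V) hb

theorem integrable_exp_neg_mul_norm_sub_sq {b : ℝ} (hb : 0 < b) (m : V) :
    Integrable fun y ↦ rexp (-(b * ‖y - m‖ ^ 2)) :=
  Integrable.of_integral_ne_zero <| by
    rw [integral_exp_neg_mul_norm_sub_sq hb m]; positivity

theorem integral_exp_neg_mul_norm_sub_sq_mul_exp_neg_mul_norm_sub_sq {a b : ℝ} (ha : 0 < a)
    (hb : 0 < b) (x z : V) :
    ∫ y, rexp (-(a * ‖x - y‖ ^ 2)) * rexp (-(b * ‖y - z‖ ^ 2)) =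
      (π / (a + b)) ^ ((Module.finrank ℝ V : ℝ) / 2) *
        rexp (-(a * b / (a + b) * ‖x - z‖ ^ 2)) := by
  have hab : 0 < a + b := add_pos ha hb
  have hsplit : ∀ y, rexp (-(a * ‖x - y‖ ^ 2)) * rexp (-(b * ‖y - z‖ ^ 2)) =
      rexp (-(a * b / (a + b) * ‖x - z‖ ^ 2)) *
        rexp (-((a + b) * ‖y - (a + b)⁻¹ • (a • x + b • z)‖ ^ 2)) := by
    intro y
    rw [← exp_add, ← exp_add, ← neg_add, ← neg_add, add_comm (a * b / (a + b) * _),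
      ← mul_norm_sub_sq_add_mul_norm_sub_sq hab.ne' x y z]
  simp_rw [hsplit, integral_const_mul, integral_exp_neg_mul_norm_sub_sq hab, mul_comm]

theorem memLp_two_exp_neg_norm_sub_sq (m : V) : MemLp (fun y ↦ rexp (-‖y - m‖ ^ 2)) 2 := by
  have hc : Continuous fun y : V ↦ rexp (-‖y - m‖ ^ 2) := by fun_prop
  rw [memLp_two_iff_integrable_sq hc.aestronglyMeasurable]
  refine (integrable_exp_neg_mul_norm_sub_sq two_pos m).congr (.of_forall fun y ↦ ?_)
  dsimp only
  rw [← exp_nat_mul]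
  ring_nf

theorem volume_ball_mul_exp_le_integral_exp_neg_mul_norm_sub_sq_mul {b μ : ℝ} (hb : 0 < b)
    (hμ : 0 ≤ μ) (x₀ : V) {ρ : V → ℝ} (hρm : AEStronglyMeasurable ρ) (hρ1 : ∀ x, ρ x ≤ 1)
    (hρ : ∀ x, rexp (-(μ * ‖x‖)) ≤ ρ x) :
    volume.real (Metric.ball (0 : V) 1) * (rexp (-b) * rexp (-(μ * (‖x₀‖ + 1)))) ≤
      ∫ x, rexp (-(b * ‖x - x₀‖ ^ 2)) * ρ x := by
  have hρ0 : ∀ x, 0 ≤ ρ x := fun x ↦ (exp_pos _).le.trans (hρ x)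
  have hint : Integrable fun x ↦ rexp (-(b * ‖x - x₀‖ ^ 2)) * ρ x :=
    (integrable_exp_neg_mul_norm_sub_sq hb x₀).mul_bdd hρm
      (.of_forall fun x ↦ by rw [Real.norm_of_nonneg (hρ0 x)]; exact hρ1 x)
  have hball : ∀ x ∈ Metric.ball x₀ 1,
      rexp (-b) * rexp (-(μ * (‖x₀‖ + 1))) ≤ rexp (-(b * ‖x - x₀‖ ^ 2)) * ρ x := by
    intro x hx
    have hd : ‖x - x₀‖ < 1 := by rwa [Metric.mem_ball, dist_eq_norm] at hx
    have hx_le : ‖x‖ ≤ ‖x₀‖ + 1 := by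
      linarith [norm_le_norm_add_norm_sub' x x₀, norm_sub_rev x x₀]
    gcongr
    · exact mul_le_of_le_one_right hb.le (pow_le_one₀ (norm_nonneg _) hd.le)
    · exact (exp_le_exp.2 (by nlinarith)).trans (hρ x)
  calc volume.real (Metric.ball (0 : V) 1) * (rexp (-b) * rexp (-(μ * (‖x₀‖ + 1))))
      = ∫ _ in Metric.ball x₀ 1, rexp (-b) * rexp (-(μ * (‖x₀‖ + 1))) := by
        rw [setIntegral_const, smul_eq_mul, Measure.real, Measure.real,
          Measure.addHaar_ball_center volume x₀]
    _ ≤ ∫ x in Metric.ball x₀ 1, rexp (-(b * ‖x - x₀‖ ^ 2)) * ρ x :=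
        setIntegral_mono_on (integrableOn_const measure_ball_lt_top.ne) hint.integrableOn
          Metric.isOpen_ball.measurableSet hball
    _ ≤ ∫ x, rexp (-(b * ‖x - x₀‖ ^ 2)) * ρ x :=
        setIntegral_le_integral hint (.of_forall fun x ↦ mul_nonneg (exp_pos _).le (hρ0 x))

end Gaussian

section Weights

variable {E : Type*} [NormedAddCommGroup E]

theorem sqrt_one_add_norm_sq_rpow_neg_le_one {ν : ℝ} (hν : 0 ≤ ν) (x : E) :
    √(1 + ‖x‖ ^ 2) ^ (-ν) ≤ 1 :=
  rpow_le_one_of_one_le_of_nonpos (one_le_sqrt.2 (by nlinarith [norm_nonneg x])) (by linarith)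

theorem exp_neg_mul_norm_le_sqrt_one_add_norm_sq_rpow_neg {ν : ℝ} (hν : 0 ≤ ν) (x : E) :
    rexp (-(ν * ‖x‖)) ≤ √(1 + ‖x‖ ^ 2) ^ (-ν) := by
  have hbracket : √(1 + ‖x‖ ^ 2) ≤ rexp ‖x‖ :=
    (sqrt_one_add_norm_sq_le x).trans (by linarith [add_one_le_exp ‖x‖])
  calc rexp (-(ν * ‖x‖)) = rexp ‖x‖ ^ (-ν) := by rw [← exp_mul]; ring_nf
    _ ≤ √(1 + ‖x‖ ^ 2) ^ (-ν) :=
        rpow_le_rpow_of_nonpos (sqrt_pos.2 (by positivity)) hbracket (by linarith)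

end Weights

section Heat

variable {n : ℕ}

local notation "ℝⁿ" => EuclideanSpace ℝ (Fin n)

theorem heatSol_exp_neg_norm_sub_sq (x₀ : ℝⁿ) {t : ℝ} (ht : 0 < t) (x : ℝⁿ) :
    heatSol n (fun y ↦ rexp (-‖y - x₀‖ ^ 2)) t x =
      (1 + 4 * t) ^ (-(n : ℝ) / 2) * rexp (-(‖x - x₀‖ ^ 2 / (1 + 4 * t))) := by
  have ha : 0 < (4 * t)⁻¹ := by positivity
  have hintegrand : ∀ y, (4 * π * t) ^ (-(n : ℝ) / 2) * rexp (-‖x - y‖ ^ 2 / (4 * t)) *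
      rexp (-‖y - x₀‖ ^ 2) = (4 * π * t) ^ (-(n : ℝ) / 2) *
        (rexp (-((4 * t)⁻¹ * ‖x - y‖ ^ 2)) * rexp (-(1 * ‖y - x₀‖ ^ 2))) := by
    intro y
    rw [one_mul, mul_assoc]
    congr 3
    ring
  simp only [heatSol, hintegrand, integral_const_mul,
    integral_exp_neg_mul_norm_sub_sq_mul_exp_neg_mul_norm_sub_sq ha one_pos,
    finrank_euclideanSpace_fin]
  have hconst : π / ((4 * t)⁻¹ + 1) = 4 * π * t / (1 + 4 * t) := by field_simp
  have hrate : (4 * t)⁻¹ * 1 / ((4 * t)⁻¹ + 1) = 1 / (1 + 4 * t) := by field_simp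
  rw [hconst, hrate, ← mul_assoc, div_rpow (by positivity) (by positivity), neg_div,
    rpow_neg (by positivity), rpow_neg (by positivity)]
  have : 0 < (4 * π * t) ^ ((n : ℝ) / 2) := by positivity
  field_simp

theorem heatSol_exp_neg_norm_sub_sq_sq (x₀ : ℝⁿ) {t : ℝ} (ht : 0 < t) (x : ℝⁿ) :
    heatSol n (fun y ↦ rexp (-‖y - x₀‖ ^ 2)) t x ^ 2 =
      (1 + 4 * t) ^ (-(n : ℝ)) * rexp (-(2 / (1 + 4 * t) * ‖x - x₀‖ ^ 2)) := by
  rw [heatSol_exp_neg_norm_sub_sq x₀ ht x, mul_pow, ← exp_nat_mul,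
    ← rpow_mul_natCast (by positivity)]
  congr 2 <;> push_cast <;> ring

theorem heatSol_exp_neg_norm_sub_sq_sq_le {x₀ x : ℝⁿ} {t T d : ℝ} (ht : 0 < t)
    (htT : t ≤ T) (hd : 0 ≤ d) (hdx : d ≤ ‖x - x₀‖) :
    heatSol n (fun y ↦ rexp (-‖y - x₀‖ ^ 2)) t x ^ 2 ≤ rexp (-(2 / (1 + 4 * T) * d ^ 2)) := by
  rw [heatSol_exp_neg_norm_sub_sq_sq x₀ ht x]
  have hdecay : (1 + 4 * t) ^ (-(n : ℝ)) ≤ 1 :=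
    rpow_le_one_of_one_le_of_nonpos (by linarith) (by simp)
  have hrate : 2 / (1 + 4 * T) ≤ 2 / (1 + 4 * t) := by gcongr
  calc (1 + 4 * t) ^ (-(n : ℝ)) * rexp (-(2 / (1 + 4 * t) * ‖x - x₀‖ ^ 2))
      ≤ 1 * rexp (-(2 / (1 + 4 * T) * d ^ 2)) := by gcongr
    _ = rexp (-(2 / (1 + 4 * T) * d ^ 2)) := one_mul _

theorem integral_Ioo_integral_ball_heatSol_exp_neg_norm_sub_sq_sq_le
    {x₀ : ℝⁿ} {T r : ℝ} (hT : 0 ≤ T) (hr : r ≤ ‖x₀‖) :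
    ∫ t in Ioo 0 T, ∫ x in Metric.ball 0 r, heatSol n (fun y ↦ rexp (-‖y - x₀‖ ^ 2)) t x ^ 2 ≤
      rexp (-(2 / (1 + 4 * T) * (‖x₀‖ - r) ^ 2)) * volume.real (Metric.ball (0 : ℝⁿ) r) * T := by
  set M := rexp (-(2 / (1 + 4 * T) * (‖x₀‖ - r) ^ 2))
  have hinner : ∀ t ∈ Ioo 0 T,
      ‖∫ x in Metric.ball 0 r, heatSol n (fun y ↦ rexp (-‖y - x₀‖ ^ 2)) t x ^ 2‖ ≤
        M * volume.real (Metric.ball (0 : ℝⁿ) r) := by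
    rintro t ⟨ht, htT⟩
    refine norm_setIntegral_le_of_norm_le_const measure_ball_lt_top fun x hx ↦ ?_
    have hdx : ‖x₀‖ - r ≤ ‖x - x₀‖ := by
      rw [mem_ball_zero_iff] at hx
      linarith [norm_sub_norm_le x₀ x, norm_sub_rev x x₀]
    rw [Real.norm_of_nonneg (sq_nonneg _)]
    exact heatSol_exp_neg_norm_sub_sq_sq_le ht htT.le (by linarith) hdx
  calc _ ≤ ‖∫ t in Ioo 0 T, ∫ x in Metric.ball 0 r,
          heatSol n (fun y ↦ rexp (-‖y - x₀‖ ^ 2)) t x ^ 2‖ := le_norm_self _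
    _ ≤ M * volume.real (Metric.ball (0 : ℝⁿ) r) * volume.real (Ioo 0 T) :=
        norm_setIntegral_le_of_norm_le_const measure_Ioo_lt_top hinner
    _ = M * volume.real (Metric.ball (0 : ℝⁿ) r) * T := by
        rw [volume_real_Ioo_of_le hT, sub_zero]

end Heat

open Filter Topology in
theorem eventually_mul_exp_neg_mul_sub_sq_lt {a : ℝ} (ha : 0 < a) (D μ r : ℝ) {K : ℝ}
    (hK : 0 < K) :
    ∀ᶠ R in atTop, D * rexp (-(a * (R - r) ^ 2)) < K * rexp (-(μ * (R + 1))) := by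
  have hquad : Tendsto (fun R ↦ a * (R - r) ^ 2 - μ * (R + 1)) atTop atTop := by
    have hshift : Tendsto (fun R : ℝ ↦ R - r) atTop atTop :=
      tendsto_atTop_add_const_right _ _ tendsto_id
    have hlin : Tendsto (fun R : ℝ ↦ a * (R - r) - μ) atTop atTop :=
      tendsto_atTop_add_const_right _ _ (hshift.const_mul_atTop ha)
    refine tendsto_atTop_add_const_right _ (-(μ * (r + 1))) (hshift.atTop_mul_atTop₀ hlin)
      |>.congr fun R ↦ by ring
  have hsmall :
      Tendsto (fun R ↦ D * rexp (-(a * (R - r) ^ 2 - μ * (R + 1)))) atTop (𝓝 0) := by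
    simpa using (tendsto_exp_atBot.comp (tendsto_neg_atTop_atBot.comp hquad)).const_mul D
  filter_upwards [hsmall.eventually (gt_mem_nhds hK)] with R hR
  calc D * rexp (-(a * (R - r) ^ 2))
      = D * rexp (-(a * (R - r) ^ 2 - μ * (R + 1))) * rexp (-(μ * (R + 1))) := by
        rw [mul_assoc, ← exp_add]; ring_nf
    _ < K * rexp (-(μ * (R + 1))) := by gcongr

open Filter in
theorem not_exists_weighted_observability_of_exp_neg_le {n : ℕ} (hn : 0 < n) {T μ : ℝ} (r : ℝ)
    (hT : 0 < T) (hμ : 0 ≤ μ) {ρ : EuclideanSpace ℝ (Fin n) → ℝ} (hρm : AEStronglyMeasurable ρ)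
    (hρ1 : ∀ x, ρ x ≤ 1) (hρ : ∀ x, rexp (-(μ * ‖x‖)) ≤ ρ x) :
    ¬ ∃ C > (0:ℝ), ∀ u₀ : EuclideanSpace ℝ (Fin n) → ℝ, MemLp u₀ 2 volume →
      ∫ x, heatSol n u₀ T x ^ 2 * ρ x ≤
        C * ∫ t in Ioo (0:ℝ) T, ∫ x in Metric.ball 0 r, heatSol n u₀ t x ^ 2 := by
  rintro ⟨C, hC, hobs⟩
  set b := 2 / (1 + 4 * T)
  set V₁ := volume.real (Metric.ball (0 : EuclideanSpace ℝ (Fin n)) 1)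
  have hV₁ : 0 < V₁ :=
    ENNReal.toReal_pos (Metric.measure_ball_pos volume 0 one_pos).ne' measure_ball_lt_top.ne
  have hK : 0 < (1 + 4 * T) ^ (-(n : ℝ)) * (V₁ * rexp (-b)) := by positivity
  obtain ⟨R, hR0, hrR, hR⟩ := ((eventually_ge_atTop 0).and ((eventually_ge_atTop r).and
    (eventually_mul_exp_neg_mul_sub_sq_lt (by positivity : 0 < b)
      (C * (volume.real (Metric.ball (0 : EuclideanSpace ℝ (Fin n)) r) * T)) μ r hK))).exists
  have : Nonempty (Fin n) := ⟨⟨0, hn⟩⟩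
  obtain ⟨x₀, rfl⟩ := exists_norm_eq (EuclideanSpace ℝ (Fin n)) hR0
  have hlow : (1 + 4 * T) ^ (-(n : ℝ)) * (V₁ * (rexp (-b) * rexp (-(μ * (‖x₀‖ + 1))))) ≤
      ∫ x, heatSol n (fun y ↦ rexp (-‖y - x₀‖ ^ 2)) T x ^ 2 * ρ x := by
    simp_rw [heatSol_exp_neg_norm_sub_sq_sq x₀ hT, mul_assoc, integral_const_mul]
    gcongr
    exact volume_ball_mul_exp_le_integral_exp_neg_mul_norm_sub_sq_mul (by positivity) hμ x₀ hρm
      hρ1 hρ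
  have hup := mul_le_mul_of_nonneg_left
    (integral_Ioo_integral_ball_heatSol_exp_neg_norm_sub_sq_sq_le hT.le hrR) hC.le
  linarith [hobs _ (memLp_two_exp_neg_norm_sub_sq x₀)]

theorem no_weighted_observability_over_ball_general (n : ℕ) (hn : 0 < n)
    (ν T r : ℝ) (hν : 0 < ν) (hT : 0 < T) :
    (¬ ∃ C > (0:ℝ), ∀ u₀ : EuclideanSpace ℝ (Fin n) → ℝ, MemLp u₀ 2 volume →
      ∫ x, heatSol n u₀ T x ^ 2 * Real.sqrt (1 + ‖x‖ ^ 2) ^ (-ν) ≤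
        C * ∫ t in Ioo (0:ℝ) T, ∫ x in Metric.ball 0 r, heatSol n u₀ t x ^ 2) ∧
    (¬ ∃ C > (0:ℝ), ∀ u₀ : EuclideanSpace ℝ (Fin n) → ℝ, MemLp u₀ 2 volume →
      ∫ x, heatSol n u₀ T x ^ 2 * Real.exp (-‖x‖) ≤
        C * ∫ t in Ioo (0:ℝ) T, ∫ x in Metric.ball 0 r, heatSol n u₀ t x ^ 2) :=
  ⟨not_exists_weighted_observability_of_exp_neg_le hn r hT hν.le
      (by fun_prop : Measurable _).aestronglyMeasurable
      (sqrt_one_add_norm_sq_rpow_neg_le_one hν.le)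
      (exp_neg_mul_norm_le_sqrt_one_add_norm_sq_rpow_neg hν.le),
    not_exists_weighted_observability_of_exp_neg_le hn r hT zero_le_one (by fun_prop)
      (fun x ↦ exp_le_one_iff.2 (neg_nonpos.2 (norm_nonneg x))) (fun x ↦ by rw [one_mul])⟩

/-- There is no weighted observability inequality over a ball, for the weights
`ρ(x) = ⟨x⟩^{-ν}` and `ρ(x) = e^{-|x|}`. -/
theorem no_weighted_observability_over_ball (n : ℕ) (hn : 0 < n)
    (ν T r : ℝ) (hν : 0 < ν) (hT : 0 < T) (hr : 0 < r) :
    (¬ ∃ C > (0:ℝ), ∀ u₀ : EuclideanSpace ℝ (Fin n) → ℝ, MemLp u₀ 2 volume →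
      ∫ x, heatSol n u₀ T x ^ 2 * Real.sqrt (1 + ‖x‖ ^ 2) ^ (-ν) ≤
        C * ∫ t in Ioo (0:ℝ) T, ∫ x in Metric.ball 0 r, heatSol n u₀ t x ^ 2) ∧
    (¬ ∃ C > (0:ℝ), ∀ u₀ : EuclideanSpace ℝ (Fin n) → ℝ, MemLp u₀ 2 volume →
      ∫ x, heatSol n u₀ T x ^ 2 * Real.exp (-‖x‖) ≤
        C * ∫ t in Ioo (0:ℝ) T, ∫ x in Metric.ball 0 r, heatSol n u₀ t x ^ 2) :=
  no_weighted_observability_over_ball_general n hn ν T r hν hT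
end
end
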